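/- The subhistory swap operator ◁ is well-defined on histories: given a history t and a subhistory s' of an ambient history sDAG such that some subhistory of t conforms with s', the conforming subhistory of t is unique and t ◁ s' is a history. Moreover, if t and s' have labels in Y and the leaves of t are labeled by X ⊆ Y, then t ◁ s' is a history with labels in Y and leaves labeled by X; that is, ◁ preserves the leaf labels of its left argument. -/

import Mathlib

universe u v

/-- A node of a history sDAG: either the universal ancestor (UA) node `ρ`,
or a node carrying a label `ℓ : Y` and a subpartition `U : Set (Set Y)`. -/
inductive HNode (Y : Type u) : Type u
  | ua : HNode Y
  | node : Y → Set (Set Y) → HNode Y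

namespace HistorySDAGs

variable {Y : Type u}

/-- `U ∈ Part(Y)`: `U` is a set of pairwise disjoint nonempty (finite) clades with `|U| ≠ 1`. -/
def IsPart (U : Set (Set Y)) : Prop :=
  (∀ C ∈ U, C ≠ ∅) ∧
  (∀ C₁ ∈ U, ∀ C₂ ∈ U, C₁ ≠ C₂ → Disjoint C₁ C₂) ∧
  (∀ C, U ≠ {C}) ∧
  U.Finite ∧ ∀ C ∈ U, C.Finite

open Classical in
/-- The clade union of a node. -/
noncomputable def cladeUnion : HNode Y → Set Y
  | HNode.ua => ∅
  | HNode.node ℓ U => if U = ∅ then {ℓ} else ⋃₀ U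

/-- Reachability via directed edges in `E`. -/
def Reach (E : Set (HNode Y × HNode Y)) (a b : HNode Y) : Prop :=
  Relation.ReflTransGen (fun x y => (x, y) ∈ E) a b

/-- `(V, E)` is a history sDAG on labels `Y`. -/
structure IsHSDAG (V : Set (HNode Y)) (E : Set (HNode Y × HNode Y)) : Prop where
  ua_mem : HNode.ua ∈ V
  valid : ∀ ℓ U, HNode.node ℓ U ∈ V → IsPart U
  edge_mem : ∀ e ∈ E, e.1 ∈ V ∧ e.2 ∈ V
  reach_ua : ∀ v ∈ V, Reach E HNode.ua v
  no_in_ua : ∀ v : HNode Y, (v, HNode.ua) ∉ E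
  edge_clade : ∀ ℓ U v, (HNode.node ℓ U, v) ∈ E → cladeUnion v ∈ U
  clade_cov : ∀ ℓ U, HNode.node ℓ U ∈ V → ∀ C ∈ U,
      ∃ v, (HNode.node ℓ U, v) ∈ E ∧ cladeUnion v = C

/-- Every node-clade pair of `V` has exactly one descendant edge in `E`. -/
def UniqueDesc (V : Set (HNode Y)) (E : Set (HNode Y × HNode Y)) : Prop :=
  ∀ ℓ U, HNode.node ℓ U ∈ V → ∀ C ∈ U,
    ∃! vc, (HNode.node ℓ U, vc) ∈ E ∧ cladeUnion vc = C

/-- `(V, E)` is a history: a history sDAG in which `ρ` has exactly one child and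
each node-clade pair has exactly one descendant edge. -/
def IsHistory (V : Set (HNode Y)) (E : Set (HNode Y × HNode Y)) : Prop :=
  IsHSDAG V E ∧ (∃! v, (HNode.ua, v) ∈ E) ∧ UniqueDesc V E

/-- `(Vs, Es)` is a subhistory of `(V, E)` with root node `vr`. -/
structure IsSubhistoryRooted (V : Set (HNode Y)) (E : Set (HNode Y × HNode Y))
    (Vs : Set (HNode Y)) (Es : Set (HNode Y × HNode Y)) (vr : HNode Y) : Prop where
  subV : Vs ⊆ V
  subE : Es ⊆ E
  ua_not_mem : HNode.ua ∉ Vs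
  edge_mem : ∀ e ∈ Es, e.1 ∈ Vs ∧ e.2 ∈ Vs
  root_mem : vr ∈ Vs
  reach_root : ∀ v ∈ Vs, Reach Es vr v
  unique_desc : ∀ ℓ U, HNode.node ℓ U ∈ Vs → ∀ C ∈ U,
      ∃! vc, (HNode.node ℓ U, vc) ∈ Es ∧ cladeUnion vc = C

/-- `(Vs, Es)` is a subhistory of `(V, E)`. -/
def IsSubhistory (V : Set (HNode Y)) (E : Set (HNode Y × HNode Y))
    (Vs : Set (HNode Y)) (Es : Set (HNode Y × HNode Y)) : Prop :=
  ∃ vr, IsSubhistoryRooted V E Vs Es vr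

/-- `(Vt, Et)` is a history in (a trim of) the history sDAG `(V, E)`. -/
def HistoryIn (V : Set (HNode Y)) (E : Set (HNode Y × HNode Y))
    (Vt : Set (HNode Y)) (Et : Set (HNode Y × HNode Y)) : Prop :=
  Vt ⊆ V ∧ Et ⊆ E ∧ IsHistory Vt Et

/-- The set of labels of leaf nodes in a node set. -/
def leafLabels (Vt : Set (HNode Y)) : Set Y := {ℓ | HNode.node ℓ ∅ ∈ Vt}

/-- A candidate history/graph: a pair of a node set and an edge set. -/
abbrev Hist (Y : Type u) := Set (HNode Y) × Set (HNode Y × HNode Y)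

/-- The node set of the history sDAG constructed from the collection `T`. -/
def unionV (T : Set (Hist Y)) : Set (HNode Y) := ⋃ t ∈ T, t.1

/-- The edge set of the history sDAG constructed from the collection `T`. -/
def unionE (T : Set (Hist Y)) : Set (HNode Y × HNode Y) := ⋃ t ∈ T, t.2

/-- The node set of the complete history sDAG on labels `Y`. -/
def completeV (Y : Type u) : Set (HNode Y) :=
  {v | v = HNode.ua ∨ ∃ ℓ U, v = HNode.node ℓ U ∧ IsPart U}

/-- The edge set of the complete history sDAG on labels `Y`. -/
def completeE (Y : Type u) : Set (HNode Y × HNode Y) :=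
  {e | e.1 ∈ completeV Y ∧ e.2 ∈ completeV Y ∧ e.2 ≠ HNode.ua ∧
    (e.1 = HNode.ua ∨ ∃ ℓ U, e.1 = HNode.node ℓ U ∧ cladeUnion e.2 ∈ U)}

variable {W : Type v}

/-- The weight `g_f` of a subgraph with edge set `Es`: the sum of `f` over all edges. -/
noncomputable def gweight [AddCommMonoid W] (f : HNode Y × HNode Y → W)
    (Es : Set (HNode Y × HNode Y)) : W := ∑ᶠ e ∈ Es, f e

/-- The order is total on the subset `S` of `W`. -/
def TotalOn [PartialOrder W] (S : Set W) : Prop := ∀ a ∈ S, ∀ b ∈ S, a ≤ b ∨ b ≤ a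

/-- The order respects addition on the subset `S` of `W`. -/
def RespectsAdd [AddCommMonoid W] [PartialOrder W] (S : Set W) : Prop :=
  ∀ a ∈ S, ∀ b ∈ S, ∀ c : W, a < b ↔ a + c < b + c

/-- Weights of subhistories of `(V, E)` rooted at `v`. -/
def subWeights [AddCommMonoid W] (f : HNode Y × HNode Y → W)
    (V : Set (HNode Y)) (E : Set (HNode Y × HNode Y)) (v : HNode Y) : Set W :=
  {w | ∃ Vs Es, IsSubhistoryRooted V E Vs Es v ∧ w = gweight f Es}

/-- Weights of augmented subhistories below the node-clade pair `(v, C)`. -/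
def augWeights [AddCommMonoid W] (f : HNode Y × HNode Y → W)
    (V : Set (HNode Y)) (E : Set (HNode Y × HNode Y)) (v : HNode Y) (C : Set Y) : Set W :=
  {w | ∃ vc Vs Es, (v, vc) ∈ E ∧ cladeUnion vc = C ∧ IsSubhistoryRooted V E Vs Es vc ∧
    w = gweight f (insert (v, vc) Es)}

/-- Weights of histories in `(V, E)`. -/
def historyWeights [AddCommMonoid W] (f : HNode Y × HNode Y → W)
    (V : Set (HNode Y)) (E : Set (HNode Y × HNode Y)) : Set W :=
  {w | ∃ Vt Et, HistoryIn V E Vt Et ∧ w = gweight f Et}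

/-- `W` is clade-ordered with respect to `f` and `(V, E)`. -/
def CladeOrdered [AddCommMonoid W] [PartialOrder W] (f : HNode Y × HNode Y → W)
    (V : Set (HNode Y)) (E : Set (HNode Y × HNode Y)) : Prop :=
  (∀ v ∈ V, v ≠ HNode.ua →
      TotalOn (subWeights f V E v) ∧ RespectsAdd (subWeights f V E v)) ∧
  (∀ ℓ U, HNode.node ℓ U ∈ V → ∀ C ∈ U,
      TotalOn (augWeights f V E (HNode.node ℓ U) C) ∧
      RespectsAdd (augWeights f V E (HNode.node ℓ U) C)) ∧
  TotalOn (historyWeights f V E)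

/-- The minimum-weight histories in `(V, E)` with respect to `g_f`. -/
def minHistories [AddCommMonoid W] [PartialOrder W] (f : HNode Y × HNode Y → W)
    (V : Set (HNode Y)) (E : Set (HNode Y × HNode Y)) : Set (Hist Y) :=
  {t | HistoryIn V E t.1 t.2 ∧
    ∀ t' : Hist Y, HistoryIn V E t'.1 t'.2 → gweight f t.2 ≤ gweight f t'.2}

open Classical in
/-- The map `q` collapsing the edge `(vp, vc)`, sending both `vp` and `vc` to `vp'`. -/
noncomputable def collapseMap (vp vc vp' : HNode Y) (v : HNode Y) : HNode Y :=
  if v = vp ∨ v = vc then vp' else v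

/-- The history obtained by collapsing the edge `(vp, vc)` (into `vp'`) in `t`. -/
noncomputable def collapseEdgeHist (vp vc vp' : HNode Y) (t : Hist Y) : Hist Y :=
  (collapseMap vp vc vp' '' t.1,
   (fun e : HNode Y × HNode Y => (collapseMap vp vc vp' e.1, collapseMap vp vc vp' e.2)) ''
     (t.2 \ {(vp, vc)}))

/-- The new parent node `(ℓ_p, (U_p ∪ U_c) \ {CU(v_c)})` formed when collapsing an edge. -/
noncomputable def newParent : HNode Y → HNode Y → HNode Y
  | HNode.node ℓp Up, HNode.node ℓc Uc =>
      HNode.node ℓp ((Up ∪ Uc) \ {cladeUnion (HNode.node ℓc Uc)})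
  | v, _ => v

/-- `t'` results from `t` by collapsing one label-collapsible edge. -/
def LabelCollapseStep (t t' : Hist Y) : Prop :=
  ∃ ℓ Up Uc, (HNode.node ℓ Up, HNode.node ℓ Uc) ∈ t.2 ∧ Uc ≠ ∅ ∧
    t' = collapseEdgeHist (HNode.node ℓ Up) (HNode.node ℓ Uc)
        (newParent (HNode.node ℓ Up) (HNode.node ℓ Uc)) t

/-- `t` is label-collapsed: it has no label-collapsible edge. -/
def LabelCollapsed (t : Hist Y) : Prop :=
  ∀ ℓ Up Uc, (HNode.node ℓ Up, HNode.node ℓ Uc) ∈ t.2 → Uc = ∅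

/-- `(vp, vc)` is a label-collapsible edge of `G`. -/
def LabelCollapsibleEdge (G : Hist Y) (vp vc : HNode Y) : Prop :=
  (vp, vc) ∈ G.2 ∧ ∃ ℓ Up Uc, vp = HNode.node ℓ Up ∧ vc = HNode.node ℓ Uc ∧ Uc ≠ ∅

/-- `T` is a label-collapsible edge cover of `G`. -/
def LabelCollapsibleEdgeCover (G : Hist Y) (T : Set (Hist Y)) : Prop :=
  (∀ t ∈ T, HistoryIn G.1 G.2 t.1 t.2) ∧
  (∀ e ∈ G.2, ∃ t ∈ T, e ∈ t.2) ∧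
  (∀ vp vc, LabelCollapsibleEdge G vp vc →
    ∀ Vs Es, IsSubhistory G.1 G.2 Vs Es → (vp, vc) ∈ Es →
      ∃ t ∈ T, Vs ⊆ t.1 ∧ Es ⊆ t.2)

open Classical in
/-- Collapsing the edge `(vp, vc)` in the history sDAG `G`, via `E⁺`, `R`, `E⁻`, `E'`, `V'`. -/
noncomputable def collapseDAGEdge (vp vc : HNode Y) (G : Hist Y) : Hist Y :=
  let vp' := newParent vp vc
  let Eplus : Set (HNode Y × HNode Y) :=
    (G.2 ∪ {e | ∃ v, e = (v, vp') ∧ (v, vp) ∈ G.2}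
        ∪ {e | ∃ v, e = (vp', v) ∧ (vp, v) ∈ G.2 ∧ cladeUnion v ≠ cladeUnion vc}
        ∪ {e | ∃ v, e = (vp', v) ∧ (vc, v) ∈ G.2}) \ {(vp, vc)}
  let R : Set (HNode Y × HNode Y) :=
    if ∃ v, (vp, v) ∈ Eplus ∧ cladeUnion v = cladeUnion vc then ∅
    else {e ∈ Eplus | e.2 = vp}
  let Eminus := Eplus \ R
  let E' := {e ∈ Eminus | Reach Eminus HNode.ua e.1}
  ({v | ∃ e ∈ E', v = e.1 ∨ v = e.2}, E')

/-- `t'` is obtained from `t` by a subhistory swap, replacing a subhistory of `t` by a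
conforming subhistory of some history in `S`. -/
def SwapStepUsing (S : Set (Hist Y)) (t t' : Hist Y) : Prop :=
  ∃ t₂ ∈ S, ∃ Vs' Es' vr' vp,
    IsSubhistoryRooted t₂.1 t₂.2 Vs' Es' vr' ∧ (vp, vr') ∈ t₂.2 ∧
    ∃ Vs Es vr, IsSubhistoryRooted t.1 t.2 Vs Es vr ∧ (vp, vr) ∈ t.2 ∧
      leafLabels Vs = leafLabels Vs' ∧
      t' = ((t.1 \ Vs) ∪ Vs', (t.2 \ (Es ∪ {(vp, vr)})) ∪ (Es' ∪ {(vp, vr')}))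

/-- Leaves of an abstract rooted graph. -/
def IsLeafIn {α : Type v} (nodes : Set α) (edges : Set (α × α)) (x : α) : Prop :=
  x ∈ nodes ∧ ∀ c, (x, c) ∉ edges

/-- Reachability via directed edges in an abstract graph. -/
def GReach {α : Type v} (edges : Set (α × α)) (a b : α) : Prop :=
  Relation.ReflTransGen (fun x y => (x, y) ∈ edges) a b

/-- An (internally) labeled tree: a rooted multifurcating tree with no unifurcations,
with node labels in `Y` that are injective on leaves. -/
structure IsLabeledTree {α : Type v} (nodes : Set α) (edges : Set (α × α))
    (root : α) (lab : α → Y) : Prop where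
  root_mem : root ∈ nodes
  edge_mem : ∀ e ∈ edges, e.1 ∈ nodes ∧ e.2 ∈ nodes
  reach_root : ∀ x ∈ nodes, GReach edges root x
  unique_parent : ∀ x a b, (a, x) ∈ edges → (b, x) ∈ edges → a = b
  no_parent_root : ∀ a, (a, root) ∉ edges
  acyclic : ∀ x, ¬ Relation.TransGen (fun a b => (a, b) ∈ edges) x x
  no_unif : ∀ x ∈ nodes, ¬ (∃! c, (x, c) ∈ edges)
  leaf_inj : ∀ x y, IsLeafIn nodes edges x → IsLeafIn nodes edges y → lab x = lab y → x = y
  finite : nodes.Finite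

/-- The set `C_w` of leaf labels below a node `w` of an abstract labeled tree. -/
def leavesBelow {α : Type v} (nodes : Set α) (edges : Set (α × α)) (lab : α → Y) (w : α) :
    Set Y :=
  {y | ∃ u, IsLeafIn nodes edges u ∧ GReach edges w u ∧ y = lab u}

/-- The history sDAG node `v_w` associated to a node `w` of a labeled tree. -/
def treeNodeOf {α : Type v} (nodes : Set α) (edges : Set (α × α)) (lab : α → Y) (w : α) :
    HNode Y :=
  HNode.node (lab w) {C | ∃ w', (w, w') ∈ edges ∧ C = leavesBelow nodes edges lab w'}

/-- The node set `V_t` of the history associated to a labeled tree. -/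
def treeToHistV {α : Type v} (nodes : Set α) (edges : Set (α × α)) (lab : α → Y) :
    Set (HNode Y) :=
  insert HNode.ua (treeNodeOf nodes edges lab '' nodes)

/-- The edge set `E_t` of the history associated to a labeled tree. -/
def treeToHistE {α : Type v} (nodes : Set α) (edges : Set (α × α)) (root : α) (lab : α → Y) :
    Set (HNode Y × HNode Y) :=
  insert (HNode.ua, treeNodeOf nodes edges lab root)
    {e | ∃ w₁ w₂, (w₁, w₂) ∈ edges ∧
      e = (treeNodeOf nodes edges lab w₁, treeNodeOf nodes edges lab w₂)}

/-! Along every edge of a history sDAG the clade union shrinks strictly, since a child clade is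
one of at least two disjoint nonempty clades. Hence reachability is acyclic, the leaves of a
subhistory rooted at `v` carry exactly the labels `CU(v)`, and in a history the clade unions
are laminar along reachability, so that every node has a unique parent and a subhistory is the
set of descendants of its root. Conforming subhistories `s ⊆ t` and `s'` therefore have roots
with the same clade union below the same node-clade pair, which pins down `s`. In `t ◁ s'`
the nodes of `t` outside `s` cannot meet `s'`: such a node would have clade union inside that
of the root of `s`, and laminarity would place it in `s`. So every node-clade pair of the swap
keeps its unique descendant edge, from `t` or from `s'`, with `(v_p, v_r)` traded for
`(v_p, v_r')`. -/

lemma reach_mono {E₁ E₂ : Set (HNode Y × HNode Y)} (h : E₁ ⊆ E₂) {a b : HNode Y}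
    (hab : Reach E₁ a b) : Reach E₂ a b :=
  Relation.ReflTransGen.mono (fun _ _ he => h he) _ _ hab

lemma reach_of_closed {E : Set (HNode Y × HNode Y)} {S : Set (HNode Y)}
    (hS : ∀ a b, (a, b) ∈ E → a ∈ S → b ∈ S) {a b : HNode Y} (hab : Reach E a b)
    (hb : b ∉ S) : Reach {e ∈ E | e.1 ∉ S ∧ e.2 ∉ S} a b := by
  induction hab with
  | refl => exact Relation.ReflTransGen.refl
  | @tail c d _ hcd ih =>
    have hc : c ∉ S := fun hc => hb (hS c d hcd hc)
    exact (ih hc).tail ⟨hcd, hc, hb⟩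

lemma leafLabels_union (A B : Set (HNode Y)) :
    leafLabels (A ∪ B) = leafLabels A ∪ leafLabels B := rfl

lemma leafLabels_diff (A B : Set (HNode Y)) :
    leafLabels (A \ B) = leafLabels A \ leafLabels B := rfl

lemma leafLabels_mono {A B : Set (HNode Y)} (h : A ⊆ B) : leafLabels A ⊆ leafLabels B :=
  fun _ hy => h hy

lemma cladeUnion_node_of_ne_empty (ℓ : Y) {U : Set (Set Y)} (hU : U ≠ ∅) :
    cladeUnion (HNode.node ℓ U) = ⋃₀ U := by
  simp [cladeUnion, hU]

lemma subset_cladeUnion_of_mem {ℓ : Y} {U : Set (Set Y)} {C : Set Y} (hC : C ∈ U) :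
    C ⊆ cladeUnion (HNode.node ℓ U) := by
  rw [cladeUnion_node_of_ne_empty ℓ (Set.nonempty_iff_ne_empty.mp ⟨C, hC⟩)]
  exact Set.subset_sUnion_of_mem hC

namespace IsPart

variable {U : Set (Set Y)}

lemma ssubset_cladeUnion (hU : IsPart U) (ℓ : Y) {C : Set Y} (hC : C ∈ U) :
    C ⊂ cladeUnion (HNode.node ℓ U) := by
  obtain ⟨C', hC', hne⟩ : ∃ C' ∈ U, C' ≠ C := by
    by_contra! h
    exact hU.2.2.1 C (Set.eq_singleton_iff_unique_mem.mpr ⟨hC, h⟩)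
  refine ⟨subset_cladeUnion_of_mem hC, fun hsub => ?_⟩
  obtain ⟨z, hz⟩ := Set.nonempty_iff_ne_empty.mpr (hU.1 C' hC')
  exact Set.disjoint_left.mp (hU.2.1 C' hC' C hC hne) hz (hsub (subset_cladeUnion_of_mem hC' hz))

lemma finite_cladeUnion (hU : IsPart U) (ℓ : Y) : (cladeUnion (HNode.node ℓ U)).Finite := by
  by_cases h : U = ∅
  · simp [cladeUnion, h]
  · rw [cladeUnion_node_of_ne_empty ℓ h]
    exact hU.2.2.2.1.sUnion hU.2.2.2.2

lemma cladeUnion_nonempty (hU : IsPart U) (ℓ : Y) :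
    (cladeUnion (HNode.node ℓ U)).Nonempty := by
  by_cases h : U = ∅
  · simp [cladeUnion, h]
  · obtain ⟨C, hC⟩ := Set.nonempty_iff_ne_empty.mpr h
    exact (Set.nonempty_iff_ne_empty.mpr (hU.1 C hC)).mono (subset_cladeUnion_of_mem hC)

end IsPart

namespace IsHSDAG

variable {V : Set (HNode Y)} {E : Set (HNode Y × HNode Y)} {a b : HNode Y}

lemma ne_ua_of_edge (hD : IsHSDAG V E) (he : (a, b) ∈ E) : b ≠ HNode.ua :=
  fun h => hD.no_in_ua a (h ▸ he)

lemma ne_ua_of_reach (hD : IsHSDAG V E) (h : Reach E a b) (ha : a ≠ HNode.ua) :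
    b ≠ HNode.ua := by
  rcases h.cases_tail with rfl | ⟨c, -, hcb⟩
  exacts [ha, hD.ne_ua_of_edge hcb]

lemma cladeUnion_nonempty (hD : IsHSDAG V E) (hv : a ∈ V) (ha : a ≠ HNode.ua) :
    (cladeUnion a).Nonempty := by
  cases a with
  | ua => exact absurd rfl ha
  | node ℓ U => exact (hD.valid ℓ U hv).cladeUnion_nonempty ℓ

lemma cladeUnion_ssubset_of_edge (hD : IsHSDAG V E) (he : (a, b) ∈ E) (ha : a ≠ HNode.ua) :
    cladeUnion b ⊂ cladeUnion a := by
  cases a with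
  | ua => exact absurd rfl ha
  | node ℓ U =>
    exact (hD.valid ℓ U (hD.edge_mem _ he).1).ssubset_cladeUnion ℓ (hD.edge_clade ℓ U b he)

lemma cladeUnion_subset_of_reach (hD : IsHSDAG V E) (h : Reach E a b) (ha : a ≠ HNode.ua) :
    cladeUnion b ⊆ cladeUnion a := by
  induction h using Relation.ReflTransGen.head_induction_on with
  | refl => exact subset_rfl
  | head hac _ ih =>
    exact (ih (hD.ne_ua_of_edge hac)).trans (hD.cladeUnion_ssubset_of_edge hac ha).subset

lemma not_reach_of_edge (hD : IsHSDAG V E) (he : (a, b) ∈ E) (ha : a ≠ HNode.ua) :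
    ¬ Reach E b a := fun h =>
  (hD.cladeUnion_ssubset_of_edge he ha).not_subset
    (hD.cladeUnion_subset_of_reach h (hD.ne_ua_of_edge he))

lemma eq_of_reach_of_cladeUnion_subset (hD : IsHSDAG V E) (h : Reach E a b)
    (ha : a ≠ HNode.ua) (hsub : cladeUnion a ⊆ cladeUnion b) : a = b := by
  rcases h.cases_head with rfl | ⟨c, hac, hcb⟩
  · rfl
  · exact absurd (hsub.trans (hD.cladeUnion_subset_of_reach hcb (hD.ne_ua_of_edge hac)))
      (hD.cladeUnion_ssubset_of_edge hac ha).not_subset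

end IsHSDAG

namespace IsHistory

variable {V : Set (HNode Y)} {E : Set (HNode Y × HNode Y)} {a b c x y : HNode Y}

lemma child_eq_of_inter (ht : IsHistory V E) (hx : (a, x) ∈ E) (hy : (a, y) ∈ E)
    (hxy : (cladeUnion x ∩ cladeUnion y).Nonempty) : x = y := by
  cases a with
  | ua =>
    obtain ⟨r, -, hr⟩ := ht.2.1
    rw [hr x hx, hr y hy]
  | node ℓ U =>
    have haV := (ht.1.edge_mem _ hx).1
    have hCx := ht.1.edge_clade ℓ U x hx
    have hCy := ht.1.edge_clade ℓ U y hy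
    have hC : cladeUnion x = cladeUnion y := by
      by_contra hne
      exact Set.not_disjoint_iff_nonempty_inter.mpr hxy ((ht.1.valid ℓ U haV).2.1 _ hCx _ hCy hne)
    obtain ⟨w, -, hw⟩ := ht.2.2 ℓ U haV _ hCx
    rw [hw x ⟨hx, rfl⟩, hw y ⟨hy, hC.symm⟩]

lemma child_eq (ht : IsHistory V E) (hx : (a, x) ∈ E) (hy : (a, y) ∈ E)
    (hxy : cladeUnion x = cladeUnion y) : x = y :=
  ht.child_eq_of_inter hx hy <| by
    rw [← hxy, Set.inter_self]
    exact ht.1.cladeUnion_nonempty (ht.1.edge_mem _ hx).2 (ht.1.ne_ua_of_edge hx)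

lemma reach_or_reach (ht : IsHistory V E) (hx : Reach E a x) (hy : Reach E a y)
    (hxy : (cladeUnion x ∩ cladeUnion y).Nonempty) : Reach E x y ∨ Reach E y x := by
  induction hx using Relation.ReflTransGen.head_induction_on generalizing y with
  | refl => exact Or.inl hy
  | @head a x₁ hax hx ih =>
    rcases hy.cases_head with rfl | ⟨y₁, hay, hy⟩
    · exact Or.inr (Relation.ReflTransGen.head hax hx)
    · obtain rfl : x₁ = y₁ := ht.child_eq_of_inter hax hay <| hxy.mono <|
        Set.inter_subset_inter
          (ht.1.cladeUnion_subset_of_reach hx (ht.1.ne_ua_of_edge hax))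
          (ht.1.cladeUnion_subset_of_reach hy (ht.1.ne_ua_of_edge hay))
      exact ih hy hxy

lemma parent_eq_of_reach (ht : IsHistory V E) (hab : Reach E a b) (hac : (a, c) ∈ E)
    (hbc : (b, c) ∈ E) : a = b := by
  rcases hab.cases_head with rfl | ⟨d, had, hdb⟩
  · rfl
  have hd := ht.1.ne_ua_of_edge had
  have hb := ht.1.ne_ua_of_reach hdb hd
  -- `c` and the first node `d` on the path to `b` are children of `a` with nested clades,
  -- so they coincide and `b → c` closes a cycle.
  obtain rfl : c = d := ht.child_eq_of_inter hac had <| by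
    rw [Set.inter_eq_left.mpr ((ht.1.cladeUnion_ssubset_of_edge hbc hb).subset.trans
      (ht.1.cladeUnion_subset_of_reach hdb hd))]
    exact ht.1.cladeUnion_nonempty (ht.1.edge_mem _ hac).2 (ht.1.ne_ua_of_edge hac)
  exact absurd hdb (ht.1.not_reach_of_edge hbc hb)

lemma parent_unique (ht : IsHistory V E) (hac : (a, c) ∈ E) (hbc : (b, c) ∈ E) : a = b := by
  have haV := (ht.1.edge_mem _ hac).1
  have hbV := (ht.1.edge_mem _ hbc).1
  by_cases ha : a = HNode.ua
  · exact ht.parent_eq_of_reach (ha ▸ ht.1.reach_ua b hbV) hac hbc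
  by_cases hb : b = HNode.ua
  · exact (ht.parent_eq_of_reach (hb ▸ ht.1.reach_ua a haV) hbc hac).symm
  have hc := ht.1.cladeUnion_nonempty (ht.1.edge_mem _ hac).2 (ht.1.ne_ua_of_edge hac)
  rcases ht.reach_or_reach (ht.1.reach_ua a haV) (ht.1.reach_ua b hbV) (hc.mono
      (Set.subset_inter (ht.1.cladeUnion_ssubset_of_edge hac ha).subset
        (ht.1.cladeUnion_ssubset_of_edge hbc hb).subset)) with hab | hba
  · exact ht.parent_eq_of_reach hab hac hbc
  · exact (ht.parent_eq_of_reach hba hbc hac).symm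

end IsHistory

namespace IsSubhistoryRooted

variable {V Vs : Set (HNode Y)} {E Es : Set (HNode Y × HNode Y)} {vr v a b : HNode Y}

lemma ne_ua_of_mem (hs : IsSubhistoryRooted V E Vs Es vr) (hv : v ∈ Vs) : v ≠ HNode.ua :=
  fun h => hs.ua_not_mem (h ▸ hv)

lemma reach (hs : IsSubhistoryRooted V E Vs Es vr) (hv : v ∈ Vs) : Reach E vr v :=
  reach_mono hs.subE (hs.reach_root v hv)

lemma parent_mem_sdiff (hD : IsHSDAG V E) (hs : IsSubhistoryRooted V E Vs Es vr)
    (hp : (a, vr) ∈ E) : a ∈ V \ Vs :=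
  ⟨(hD.edge_mem _ hp).1, fun ha => hD.not_reach_of_edge hp (hs.ne_ua_of_mem ha) (hs.reach ha)⟩

lemma leaf_mem_of_mem_cladeUnion (hD : IsHSDAG V E) (hs : IsSubhistoryRooted V E Vs Es vr)
    (hv : v ∈ Vs) {y : Y} (hy : y ∈ cladeUnion v) : HNode.node y ∅ ∈ Vs := by
  induction hn : (cladeUnion v).ncard using Nat.strong_induction_on generalizing v with
  | _ n ih =>
  cases v with
  | ua => exact absurd hv hs.ua_not_mem
  | node ℓ U =>
    by_cases h0 : U = ∅
    · subst h0
      obtain rfl : y = ℓ := by simpa [cladeUnion] using hy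
      exact hv
    · have hU := hD.valid ℓ U (hs.subV hv)
      obtain ⟨C, hC, hyC⟩ : ∃ C ∈ U, y ∈ C := by
        simpa [cladeUnion_node_of_ne_empty ℓ h0] using hy
      obtain ⟨c, ⟨hc, rfl⟩, -⟩ := hs.unique_desc ℓ U hv C hC
      have hlt := Set.ncard_lt_ncard (hU.ssubset_cladeUnion ℓ hC) (hU.finite_cladeUnion ℓ)
      exact ih _ (hn ▸ hlt) (hs.edge_mem _ hc).2 hyC rfl

lemma leafLabels_eq (hD : IsHSDAG V E) (hs : IsSubhistoryRooted V E Vs Es vr) :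
    leafLabels Vs = cladeUnion vr := by
  ext y
  refine ⟨fun hy => ?_, hs.leaf_mem_of_mem_cladeUnion hD hs.root_mem⟩
  exact hD.cladeUnion_subset_of_reach (hs.reach hy) (hs.ne_ua_of_mem hs.root_mem)
    (by simp [cladeUnion])

lemma edge_mem_of_fst_mem (ht : IsHistory V E) (hs : IsSubhistoryRooted V E Vs Es vr)
    (hab : (a, b) ∈ E) (ha : a ∈ Vs) : (a, b) ∈ Es := by
  cases a with
  | ua => exact absurd ha hs.ua_not_mem
  | node ℓ U =>
    obtain ⟨c, ⟨hc, hcb⟩, -⟩ := hs.unique_desc ℓ U ha _ (ht.1.edge_clade ℓ U b hab)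
    rwa [← ht.child_eq (hs.subE hc) hab hcb]

lemma mem_of_reach (ht : IsHistory V E) (hs : IsSubhistoryRooted V E Vs Es vr)
    (hab : Reach E a b) (ha : a ∈ Vs) : b ∈ Vs := by
  induction hab with
  | refl => exact ha
  | tail _ hcd ih => exact (hs.edge_mem _ (hs.edge_mem_of_fst_mem ht hcd ih)).2

lemma nodes_eq (ht : IsHistory V E) (hs : IsSubhistoryRooted V E Vs Es vr) :
    Vs = {v | Reach E vr v} :=
  Set.ext fun _ => ⟨hs.reach, fun h => hs.mem_of_reach ht h hs.root_mem⟩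

lemma edges_eq (ht : IsHistory V E) (hs : IsSubhistoryRooted V E Vs Es vr) :
    Es = {e ∈ E | e.1 ∈ Vs} :=
  Set.ext fun _ => ⟨fun h => ⟨hs.subE h, (hs.edge_mem _ h).1⟩,
    fun h => hs.edge_mem_of_fst_mem ht h.1 h.2⟩

lemma mem_or_eq_of_edge_into (ht : IsHistory V E) (hs : IsSubhistoryRooted V E Vs Es vr)
    {vp : HNode Y} (hp : (vp, vr) ∈ E) (hab : (a, b) ∈ E) (hb : b ∈ Vs) :
    a ∈ Vs ∨ (a, b) = (vp, vr) := by
  rcases (hs.reach_root b hb).cases_tail with rfl | ⟨c, -, hcb⟩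
  · exact Or.inr (by rw [ht.parent_unique hab hp])
  · exact Or.inl (ht.parent_unique hab (hs.subE hcb) ▸ (hs.edge_mem _ hcb).1)

lemma diff_edges_eq (ht : IsHistory V E) (hs : IsSubhistoryRooted V E Vs Es vr)
    {vp : HNode Y} (hp : (vp, vr) ∈ E) :
    E \ (Es ∪ {(vp, vr)}) = {e ∈ E | e.1 ∉ Vs ∧ e.2 ∉ Vs} := by
  ext ⟨a, b⟩
  simp only [Set.mem_sdiff, Set.mem_union, Set.mem_singleton_iff, Set.mem_ofPred_eq, not_or]
  refine ⟨fun ⟨hab, hn, hne⟩ => ?_, fun ⟨hab, ha, hb⟩ => ?_⟩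
  · have ha : a ∉ Vs := fun ha => hn (hs.edge_mem_of_fst_mem ht hab ha)
    exact ⟨hab, ha, fun hb => (hs.mem_or_eq_of_edge_into ht hp hab hb).elim ha hne⟩
  · exact ⟨hab, fun h => ha (hs.edge_mem _ h).1,
      fun h => hb ((Prod.mk.inj h).2 ▸ hs.root_mem)⟩

lemma mem_of_cladeUnion_subset (ht : IsHistory V E) (hs : IsSubhistoryRooted V E Vs Es vr)
    (hv : v ∈ V) (hne : v ≠ HNode.ua) (hsub : cladeUnion v ⊆ cladeUnion vr) : v ∈ Vs := by
  have hvr := hs.subV hs.root_mem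
  rcases ht.reach_or_reach (ht.1.reach_ua v hv) (ht.1.reach_ua vr hvr) (by
      rw [Set.inter_eq_left.mpr hsub]; exact ht.1.cladeUnion_nonempty hv hne) with h | h
  · exact ht.1.eq_of_reach_of_cladeUnion_subset h hne hsub ▸ hs.root_mem
  · exact hs.mem_of_reach ht h hs.root_mem

lemma eq_of_leafLabels_eq (ht : IsHistory V E) (hs : IsSubhistoryRooted V E Vs Es vr)
    {Vs₂ : Set (HNode Y)} {Es₂ : Set (HNode Y × HNode Y)} {vr₂ vp : HNode Y}
    (hs₂ : IsSubhistoryRooted V E Vs₂ Es₂ vr₂) (hp : (vp, vr) ∈ E)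
    (hp₂ : (vp, vr₂) ∈ E)
    (h : leafLabels Vs₂ = leafLabels Vs) : Vs₂ = Vs ∧ Es₂ = Es ∧ vr₂ = vr := by
  obtain rfl : vr₂ = vr := ht.child_eq hp₂ hp <| by
    rw [← hs₂.leafLabels_eq ht.1, h, hs.leafLabels_eq ht.1]
  have hV : Vs₂ = Vs := by rw [hs₂.nodes_eq ht, hs.nodes_eq ht]
  exact ⟨hV, by rw [hs₂.edges_eq ht, hs.edges_eq ht, hV], rfl⟩

end IsSubhistoryRooted

def swapNodes (Vt Vs Vs' : Set (HNode Y)) : Set (HNode Y) := (Vt \ Vs) ∪ Vs'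

def swapEdges (Et Es Es' : Set (HNode Y × HNode Y)) (vp vr vr' : HNode Y) :
    Set (HNode Y × HNode Y) :=
  (Et \ (Es ∪ {(vp, vr)})) ∪ (Es' ∪ {(vp, vr')})

section Swap

variable {V Vt Vs Vs' : Set (HNode Y)} {E Et Es Es' : Set (HNode Y × HNode Y)}
  {vp vr vr' n : HNode Y}

lemma mem_swapEdges (ht : IsHistory Vt Et) (hs : IsSubhistoryRooted Vt Et Vs Es vr)
    (hp : (vp, vr) ∈ Et) {a b : HNode Y} :
    (a, b) ∈ swapEdges Et Es Es' vp vr vr' ↔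
      ((a, b) ∈ Et ∧ a ∉ Vs ∧ b ∉ Vs) ∨ (a, b) ∈ Es' ∨ (a, b) = (vp, vr') := by
  rw [swapEdges, hs.diff_edges_eq ht hp]
  exact Iff.rfl

lemma disjoint_sdiff_of_cladeUnion_eq (hD : IsHSDAG V E)
    (hs' : IsSubhistoryRooted V E Vs' Es' vr') (ht : IsHistory Vt Et)
    (hs : IsSubhistoryRooted Vt Et Vs Es vr) (hcu : cladeUnion vr' = cladeUnion vr) :
    Disjoint (Vt \ Vs) Vs' :=
  Set.disjoint_left.mpr fun _ ⟨hm, hms⟩ hm' => hms <|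
    hs.mem_of_cladeUnion_subset ht hm (hs'.ne_ua_of_mem hm') <|
      hcu ▸ hD.cladeUnion_subset_of_reach (hs'.reach hm') (hs'.ne_ua_of_mem hs'.root_mem)

lemma mem_swapEdges_of_fst_mem (ht : IsHistory Vt Et)
    (hs : IsSubhistoryRooted Vt Et Vs Es vr) (hp : (vp, vr) ∈ Et)
    (hdisj : Disjoint (Vt \ Vs) Vs') (hn : n ∈ Vs') {x : HNode Y} :
    (n, x) ∈ swapEdges Et Es Es' vp vr vr' ↔ (n, x) ∈ Es' := by
  have hn' : n ∉ Vt \ Vs := hdisj.notMem_of_mem_right hn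
  rw [mem_swapEdges ht hs hp]
  refine ⟨?_, fun h => Or.inr (Or.inl h)⟩
  rintro (⟨hnx, hns, -⟩ | h | h)
  · exact absurd ⟨(ht.1.edge_mem _ hnx).1, hns⟩ hn'
  · exact h
  · exact absurd ((Prod.mk.inj h).1 ▸ hs.parent_mem_sdiff ht.1 hp) hn'

lemma mem_swapEdges_of_fst_mem_sdiff (hs' : IsSubhistoryRooted V E Vs' Es' vr')
    (ht : IsHistory Vt Et) (hs : IsSubhistoryRooted Vt Et Vs Es vr) (hp : (vp, vr) ∈ Et)
    (hdisj : Disjoint (Vt \ Vs) Vs') (hn : n ∈ Vt \ Vs) {x : HNode Y} :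
    (n, x) ∈ swapEdges Et Es Es' vp vr vr' ↔
      ((n, x) ∈ Et ∧ x ∉ Vs) ∨ (n = vp ∧ x = vr') := by
  rw [mem_swapEdges ht hs hp, Prod.mk.injEq]
  refine ⟨?_, ?_⟩
  · rintro (⟨hnx, -, hx⟩ | h | h)
    · exact Or.inl ⟨hnx, hx⟩
    · exact absurd (hs'.edge_mem _ h).1 (hdisj.notMem_of_mem_left hn)
    · exact Or.inr h
  · rintro (⟨hnx, hx⟩ | h)
    · exact Or.inl ⟨hnx, hn.2, hx⟩
    · exact Or.inr (Or.inr h)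

lemma existsUnique_swapEdges (hs' : IsSubhistoryRooted V E Vs' Es' vr')
    (ht : IsHistory Vt Et) (hs : IsSubhistoryRooted Vt Et Vs Es vr) (hp : (vp, vr) ∈ Et)
    (hdisj : Disjoint (Vt \ Vs) Vs') (hn : n ∈ Vt \ Vs) {P : HNode Y → Prop}
    (hP : P vr' ↔ P vr) (h : ∃! x, (n, x) ∈ Et ∧ P x) :
    ∃! x, (n, x) ∈ swapEdges Et Es Es' vp vr vr' ∧ P x := by
  obtain ⟨w, ⟨hw, hPw⟩, huniq⟩ := h
  simp only [mem_swapEdges_of_fst_mem_sdiff hs' ht hs hp hdisj hn]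
  by_cases hwr : n = vp ∧ w = vr
  · obtain ⟨rfl, rfl⟩ := hwr
    refine ⟨vr', ⟨Or.inr ⟨rfl, rfl⟩, hP.2 hPw⟩, ?_⟩
    rintro x ⟨⟨hx, hxs⟩ | ⟨-, rfl⟩, hPx⟩
    · exact absurd (huniq x ⟨hx, hPx⟩ ▸ hs.root_mem) hxs
    · rfl
  · have hws : w ∉ Vs := fun hws =>
      (hs.mem_or_eq_of_edge_into ht hp hw hws).elim hn.2 fun h => hwr (Prod.mk.inj h)
    refine ⟨w, ⟨Or.inl ⟨hw, hws⟩, hPw⟩, ?_⟩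
    rintro x ⟨⟨hx, -⟩ | ⟨rfl, rfl⟩, hPx⟩
    · exact huniq x ⟨hx, hPx⟩
    · exact absurd ⟨rfl, (huniq vr ⟨hp, hP.1 hPx⟩).symm⟩ hwr

lemma uniqueDesc_swap (hD : IsHSDAG V E) (hs' : IsSubhistoryRooted V E Vs' Es' vr')
    (ht : IsHistory Vt Et) (hs : IsSubhistoryRooted Vt Et Vs Es vr) (hp : (vp, vr) ∈ Et)
    (hcu : cladeUnion vr' = cladeUnion vr) :
    UniqueDesc (swapNodes Vt Vs Vs') (swapEdges Et Es Es' vp vr vr') := by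
  have hdisj := disjoint_sdiff_of_cladeUnion_eq hD hs' ht hs hcu
  rintro ℓ U (hn | hn) C hC
  · exact existsUnique_swapEdges hs' ht hs hp hdisj hn (by rw [hcu]) (ht.2.2 ℓ U hn.1 C hC)
  · simp only [mem_swapEdges_of_fst_mem ht hs hp hdisj hn]
    exact hs'.unique_desc ℓ U hn C hC

lemma reach_swap (hs' : IsSubhistoryRooted V E Vs' Es' vr') (ht : IsHistory Vt Et)
    (hs : IsSubhistoryRooted Vt Et Vs Es vr) (hp : (vp, vr) ∈ Et) {v : HNode Y}
    (hv : v ∈ swapNodes Vt Vs Vs') : Reach (swapEdges Et Es Es' vp vr vr') HNode.ua v := by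
  have hsub : {e ∈ Et | e.1 ∉ Vs ∧ e.2 ∉ Vs} ⊆ swapEdges Et Es Es' vp vr vr' := by
    rw [swapEdges, ← hs.diff_edges_eq ht hp]
    exact Set.subset_union_left
  have hout : ∀ w ∈ Vt \ Vs, Reach (swapEdges Et Es Es' vp vr vr') HNode.ua w :=
    fun w ⟨hw, hws⟩ => reach_mono hsub <| reach_of_closed
      (fun _ _ hab ha => hs.mem_of_reach ht (Relation.ReflTransGen.single hab) ha)
      (ht.1.reach_ua w hw) hws
  rcases hv with hv | hv
  · exact hout v hv
  · exact ((hout vp (hs.parent_mem_sdiff ht.1 hp)).tail (Or.inr (Or.inr rfl))).trans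
      (reach_mono (fun _ he => Or.inr (Or.inl he)) (hs'.reach_root v hv))

lemma isHSDAG_swap (hD : IsHSDAG V E) (hs' : IsSubhistoryRooted V E Vs' Es' vr')
    (ht : IsHistory Vt Et) (hs : IsSubhistoryRooted Vt Et Vs Es vr) (hp : (vp, vr) ∈ Et)
    (hcu : cladeUnion vr' = cladeUnion vr) :
    IsHSDAG (swapNodes Vt Vs Vs') (swapEdges Et Es Es' vp vr vr') where
  ua_mem := Or.inl ⟨ht.1.ua_mem, hs.ua_not_mem⟩
  valid ℓ U := by
    rintro (h | h)
    exacts [ht.1.valid ℓ U h.1, hD.valid ℓ U (hs'.subV h)]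
  edge_mem := by
    rintro ⟨a, b⟩ he
    rcases (mem_swapEdges ht hs hp).mp he with ⟨hab, ha, hb⟩ | he | he
    · exact ⟨Or.inl ⟨(ht.1.edge_mem _ hab).1, ha⟩,
        Or.inl ⟨(ht.1.edge_mem _ hab).2, hb⟩⟩
    · exact ⟨Or.inr (hs'.edge_mem _ he).1, Or.inr (hs'.edge_mem _ he).2⟩
    · obtain ⟨rfl, rfl⟩ := Prod.mk.inj he
      exact ⟨Or.inl (hs.parent_mem_sdiff ht.1 hp), Or.inr hs'.root_mem⟩
  reach_ua _ := reach_swap hs' ht hs hp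
  no_in_ua a he := by
    rcases (mem_swapEdges ht hs hp).mp he with ⟨hab, -⟩ | he | he
    · exact ht.1.no_in_ua a hab
    · exact hD.no_in_ua a (hs'.subE he)
    · exact hs'.ne_ua_of_mem hs'.root_mem (Prod.mk.inj he).2.symm
  edge_clade ℓ U v he := by
    rcases (mem_swapEdges ht hs hp).mp he with ⟨hab, -⟩ | he | he
    · exact ht.1.edge_clade ℓ U v hab
    · exact hD.edge_clade ℓ U v (hs'.subE he)
    · obtain ⟨hvp, rfl⟩ := Prod.mk.inj he
      exact hcu ▸ ht.1.edge_clade ℓ U vr (hvp ▸ hp)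
  clade_cov ℓ U hn C hC := (uniqueDesc_swap hD hs' ht hs hp hcu ℓ U hn C hC).exists

lemma isHistory_swap (hD : IsHSDAG V E) (hs' : IsSubhistoryRooted V E Vs' Es' vr')
    (ht : IsHistory Vt Et) (hs : IsSubhistoryRooted Vt Et Vs Es vr) (hp : (vp, vr) ∈ Et)
    (hcu : cladeUnion vr' = cladeUnion vr) :
    IsHistory (swapNodes Vt Vs Vs') (swapEdges Et Es Es' vp vr vr') := by
  refine ⟨isHSDAG_swap hD hs' ht hs hp hcu, ?_, uniqueDesc_swap hD hs' ht hs hp hcu⟩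
  simpa using existsUnique_swapEdges (P := fun _ => True) hs' ht hs hp
    (disjoint_sdiff_of_cladeUnion_eq hD hs' ht hs hcu) ⟨ht.1.ua_mem, hs.ua_not_mem⟩ Iff.rfl
    (by simpa using ht.2.1)

end Swap

theorem swap_well_defined_general
    (V : Set (HNode Y)) (E : Set (HNode Y × HNode Y)) (hD : IsHSDAG V E)
    (Vs' Es' : _) (vr' : HNode Y) (hs' : IsSubhistoryRooted V E Vs' Es' vr')
    (vp : HNode Y)
    (Vt : Set (HNode Y)) (Et : Set (HNode Y × HNode Y)) (ht : IsHistory Vt Et)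
    (Vs Es : _) (vr : HNode Y) (hs : IsSubhistoryRooted Vt Et Vs Es vr)
    (hp : (vp, vr) ∈ Et)
    (hconf : leafLabels Vs = leafLabels Vs') :
    (∀ Vs₂ Es₂ (vr₂ : HNode Y), IsSubhistoryRooted Vt Et Vs₂ Es₂ vr₂ → (vp, vr₂) ∈ Et →
        leafLabels Vs₂ = leafLabels Vs' → Vs₂ = Vs ∧ Es₂ = Es ∧ vr₂ = vr) ∧
    IsHistory ((Vt \ Vs) ∪ Vs') ((Et \ (Es ∪ {(vp, vr)})) ∪ (Es' ∪ {(vp, vr')})) ∧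
    leafLabels ((Vt \ Vs) ∪ Vs') = leafLabels Vt := by
  have hcu : cladeUnion vr' = cladeUnion vr := by
    rw [← hs'.leafLabels_eq hD, ← hconf, hs.leafLabels_eq ht.1]
  refine ⟨fun _ _ _ hs₂ hp₂ hconf₂ =>
    hs.eq_of_leafLabels_eq ht hs₂ hp hp₂ (hconf₂.trans hconf.symm),
    isHistory_swap hD hs' ht hs hp hcu, ?_⟩
  rw [leafLabels_union, leafLabels_diff, ← hconf,
    Set.sdiff_union_of_subset (leafLabels_mono hs.subV)]

/-- Lemma `tlwelldefined`: the subhistory swap operator is well-defined: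
the conforming subhistory of `t` is unique, the swap is a history, and the swap preserves
the leaf labels of its left argument. -/
theorem swap_well_defined
    (V : Set (HNode Y)) (E : Set (HNode Y × HNode Y)) (hD : IsHSDAG V E)
    (Vs' Es' : _) (vr' : HNode Y) (hs' : IsSubhistoryRooted V E Vs' Es' vr')
    (vp : HNode Y) (hp' : (vp, vr') ∈ E)
    (Vt : Set (HNode Y)) (Et : Set (HNode Y × HNode Y)) (ht : IsHistory Vt Et)
    (Vs Es : _) (vr : HNode Y) (hs : IsSubhistoryRooted Vt Et Vs Es vr)
    (hp : (vp, vr) ∈ Et)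
    (hconf : leafLabels Vs = leafLabels Vs') :
    (∀ Vs₂ Es₂ (vr₂ : HNode Y), IsSubhistoryRooted Vt Et Vs₂ Es₂ vr₂ → (vp, vr₂) ∈ Et →
        leafLabels Vs₂ = leafLabels Vs' → Vs₂ = Vs ∧ Es₂ = Es ∧ vr₂ = vr) ∧
    IsHistory ((Vt \ Vs) ∪ Vs') ((Et \ (Es ∪ {(vp, vr)})) ∪ (Es' ∪ {(vp, vr')})) ∧
    leafLabels ((Vt \ Vs) ∪ Vs') = leafLabels Vt :=
  swap_well_defined_general V E hD Vs' Es' vr' hs' vp Vt Et ht Vs Es vr hs hp hconf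

end HistorySDAGs
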